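/- arXiv:2407.01316 — 2 statements merged into one kernel-verified Lean document; each statement's English description precedes it below -/
import Mathlib

section
/- For any probability measure P with μ(Z) ≥ 0 P-almost surely and E[(μ(Z))_+] < ∞, the set of minimizers of η ↦ (1/α) E[(μ(Z) − η)_+] + η over ℝ is exactly the closed interval [q_{1−α}, q_{1−α,+}], where q_{1−α} = inf{t : P(μ(Z) ≤ t) ≥ 1−α} is the (1−α)-quantile and q_{1−α,+} = inf{t : P(μ(Z) ≤ t) > 1−α} is the upper (1−α)-quantile. -/
/-!
Pass to the law `ν` of `μ` on `ℝ`, with distribution function `F`. Writing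
`g η = ∫ (x - η)₊ dν`, for `a ≤ b` the increment `g a - g b` lies between
`(b - a) ν [b, ∞)` and `(b - a) ν (a, ∞)`. Comparing `g η / α + η` with its values to the
right and to the left of `η`, and letting the comparison point tend to `η`, shows that `η` is a
minimizer iff `ν (η, ∞) ≤ α ≤ ν [η, ∞)`, i.e. `F(η⁻) ≤ 1 - α ≤ F η`. By right continuity of
`F`, the condition `1 - α ≤ F η` says `q_{1-α} ≤ η`, while `F(η⁻) ≤ 1 - α` says that no
`t < η` has `F t > 1 - α`, i.e. `η ≤ q_{1-α,+}`.
-/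

open MeasureTheory ProbabilityTheory Set Filter Topology Function

theorem StieltjesFunction.le_apply_iff_forall_gt (f : StieltjesFunction ℝ) {x c : ℝ} :
    c ≤ f x ↔ ∀ y > x, c ≤ f y :=
  ⟨fun h _ hy => h.trans (f.mono hy.le), fun h => ge_of_tendsto
    ((f.right_continuous x).mono Ioi_subset_Ici_self) (eventually_nhdsWithin_of_forall h)⟩

theorem Monotone.leftLim_le_iff {f : ℝ → ℝ} (hf : Monotone f) {x c : ℝ} :
    leftLim f x ≤ c ↔ ∀ y < x, f y ≤ c :=
  ⟨fun h _ hy => (hf.le_leftLim hy).trans h,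
    fun h => _root_.le_of_tendsto (hf.tendsto_leftLim x) (eventually_nhdsWithin_of_forall h)⟩

section Quantile

variable {f : ℝ → ℝ} {a b c : ℝ}

theorem bddBelow_setOf_le_apply (hf : Tendsto f atBot (𝓝 a)) (hc : a < c) :
    BddBelow {t | c ≤ f t} := by
  obtain ⟨t₀, ht₀⟩ := eventually_atBot.1 (hf.eventually (gt_mem_nhds hc))
  exact ⟨t₀, fun t ht => le_of_not_gt fun hlt => (ht₀ t hlt.le).not_ge ht⟩

theorem nonempty_setOf_lt_apply (hf : Tendsto f atTop (𝓝 b)) (hc : c < b) :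
    {t | c < f t}.Nonempty :=
  (hf.eventually (lt_mem_nhds hc)).exists

theorem csInf_setOf_le_apply_le_iff (F : StieltjesFunction ℝ) (hbdd : BddBelow {t | c ≤ F t})
    (hne : {t | c ≤ F t}.Nonempty) {x : ℝ} : sInf {t | c ≤ F t} ≤ x ↔ c ≤ F x := by
  refine ⟨fun hx => F.le_apply_iff_forall_gt.2 fun y hy => ?_, csInf_le hbdd⟩
  obtain ⟨s, hs, hsy⟩ := exists_lt_of_csInf_lt hne (hx.trans_lt hy)
  exact hs.trans (F.mono hsy.le)

theorem le_csInf_setOf_lt_apply_iff (hf : Monotone f) (hbdd : BddBelow {t | c < f t})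
    (hne : {t | c < f t}.Nonempty) {x : ℝ} : x ≤ sInf {t | c < f t} ↔ leftLim f x ≤ c := by
  simp only [le_csInf_iff hbdd hne, hf.leftLim_le_iff, mem_ofPred_eq, ← not_lt]
  exact forall_congr' fun _ => imp_not_comm

end Quantile

section CVaRDual

variable {ν : Measure ℝ} {a b α η : ℝ}

theorem integrable_max_sub_const [IsFiniteMeasure ν] (h : Integrable (fun x => max x 0) ν)
    (η : ℝ) : Integrable (fun x => max (x - η) 0) ν := by
  refine (h.add (integrable_const |η|)).mono' (by fun_prop) (ae_of_all _ fun x => ?_)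
  rw [Pi.add_apply, Real.norm_of_nonneg (le_max_right _ _)]
  exact max_le (by linarith [le_max_left x 0, neg_abs_le η]) (by positivity)

theorem measureReal_Ici_mul_le_integral_sub [IsFiniteMeasure ν]
    (h : Integrable (fun x => max x 0) ν) (hab : a ≤ b) :
    ν.real (Ici b) * (b - a) ≤ ∫ x, max (x - a) 0 ∂ν - ∫ x, max (x - b) 0 ∂ν := by
  rw [← smul_eq_mul, ← integral_indicator_const _ measurableSet_Ici,
    ← integral_sub (integrable_max_sub_const h a) (integrable_max_sub_const h b)]
  refine integral_mono ((integrable_const _).indicator measurableSet_Ici)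
    ((integrable_max_sub_const h a).sub (integrable_max_sub_const h b)) fun x => ?_
  simp only [indicator_apply, mem_Ici, max_def]
  split_ifs <;> linarith

theorem integral_sub_le_measureReal_Ioi_mul [IsFiniteMeasure ν]
    (h : Integrable (fun x => max x 0) ν) (hab : a ≤ b) :
    ∫ x, max (x - a) 0 ∂ν - ∫ x, max (x - b) 0 ∂ν ≤ ν.real (Ioi a) * (b - a) := by
  rw [← smul_eq_mul, ← integral_indicator_const _ measurableSet_Ioi,
    ← integral_sub (integrable_max_sub_const h a) (integrable_max_sub_const h b)]
  refine integral_mono ((integrable_max_sub_const h a).sub (integrable_max_sub_const h b))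
    ((integrable_const _).indicator measurableSet_Ioi) fun x => ?_
  simp only [indicator_apply, mem_Ioi, max_def]
  split_ifs <;> linarith

theorem measureReal_Ioi_eq_one_sub_cdf [IsProbabilityMeasure ν] (x : ℝ) :
    ν.real (Ioi x) = 1 - cdf ν x := by
  rw [measureReal_def, ← measure_cdf ν, (cdf ν).measure_Ioi (tendsto_cdf_atTop ν),
    ENNReal.toReal_ofReal (sub_nonneg.2 (cdf_le_one ν x)), measure_cdf]

theorem measureReal_Ici_eq_one_sub_leftLim_cdf [IsProbabilityMeasure ν] (x : ℝ) :
    ν.real (Ici x) = 1 - leftLim (cdf ν) x := by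
  rw [measureReal_def, ← measure_cdf ν, (cdf ν).measure_Ici (tendsto_cdf_atTop ν),
    ENNReal.toReal_ofReal (sub_nonneg.2 (((monotone_cdf ν).leftLim_le le_rfl).trans
      (cdf_le_one ν x))), measure_cdf]

noncomputable def cvarDualObjective (ν : Measure ℝ) (α η : ℝ) : ℝ :=
  (1 / α) * ∫ x, max (x - η) 0 ∂ν + η

theorem cvarDualObjective_le_iff (hα : 0 < α) {η' : ℝ} :
    cvarDualObjective ν α η ≤ cvarDualObjective ν α η' ↔
      ∫ x, max (x - η) 0 ∂ν - ∫ x, max (x - η') 0 ∂ν ≤ α * (η' - η) := by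
  rw [← sub_nonneg, ← sub_nonneg (b := _ - _)]
  have key : cvarDualObjective ν α η' - cvarDualObjective ν α η =
      (α * (η' - η) - (∫ x, max (x - η) 0 ∂ν - ∫ x, max (x - η') 0 ∂ν)) / α := by
    unfold cvarDualObjective
    field_simp
    ring
  rw [key, le_div_iff₀ hα, zero_mul]

theorem forall_cvarDualObjective_le_iff [IsProbabilityMeasure ν]
    (h : Integrable (fun x => max x 0) ν) (hα : 0 < α) :
    (∀ η', cvarDualObjective ν α η ≤ cvarDualObjective ν α η') ↔
      1 - α ≤ cdf ν η ∧ leftLim (cdf ν) η ≤ 1 - α := by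
  simp only [cvarDualObjective_le_iff hα]
  constructor
  · intro hmin
    refine ⟨(cdf ν).le_apply_iff_forall_gt.2 fun b hb => ?_,
      (monotone_cdf ν).leftLim_le_iff.2 fun a ha => ?_⟩
    · have hslope := measureReal_Ici_mul_le_integral_sub h hb.le
      rw [measureReal_Ici_eq_one_sub_leftLim_cdf] at hslope
      have : (1 - leftLim (cdf ν) b) * (b - η) ≤ α * (b - η) := hslope.trans (hmin b)
      linarith [le_of_mul_le_mul_right this (sub_pos.2 hb),
        (monotone_cdf ν).leftLim_le (le_refl b)]
    · have hslope := integral_sub_le_measureReal_Ioi_mul h ha.le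
      rw [measureReal_Ioi_eq_one_sub_cdf] at hslope
      have : α * (η - a) ≤ (1 - cdf ν a) * (η - a) := by linarith [hmin a]
      linarith [le_of_mul_le_mul_right this (sub_pos.2 ha)]
  · rintro ⟨hright, hleft⟩ η'
    rcases le_total η η' with hle | hle
    · calc ∫ x, max (x - η) 0 ∂ν - ∫ x, max (x - η') 0 ∂ν ≤ ν.real (Ioi η) * (η' - η) :=
            integral_sub_le_measureReal_Ioi_mul h hle
        _ = (1 - cdf ν η) * (η' - η) := by rw [measureReal_Ioi_eq_one_sub_cdf]
        _ ≤ α * (η' - η) := mul_le_mul_of_nonneg_right (by linarith) (sub_nonneg.2 hle)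
    · have hslope := measureReal_Ici_mul_le_integral_sub h hle
      rw [measureReal_Ici_eq_one_sub_leftLim_cdf] at hslope
      linarith [mul_le_mul_of_nonneg_right (show α ≤ 1 - leftLim (cdf ν) η by linarith)
        (sub_nonneg.2 hle)]

theorem setOf_forall_cvarDualObjective_le_eq_Icc [IsProbabilityMeasure ν]
    (h : Integrable (fun x => max x 0) ν) (hα : α ∈ Ioo 0 1) :
    {η | ∀ η', cvarDualObjective ν α η ≤ cvarDualObjective ν α η'} =
      Icc (sInf {t | 1 - α ≤ cdf ν t}) (sInf {t | 1 - α < cdf ν t}) := by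
  have hB : {t | 1 - α < cdf ν t}.Nonempty :=
    nonempty_setOf_lt_apply (tendsto_cdf_atTop ν) (by linarith [hα.1])
  have hA : BddBelow {t | 1 - α ≤ cdf ν t} :=
    bddBelow_setOf_le_apply (tendsto_cdf_atBot ν) (by linarith [hα.2])
  have hBA : {t | 1 - α < cdf ν t} ⊆ {t | 1 - α ≤ cdf ν t} :=
    ofPred_subset_ofPred.2 fun _ => le_of_lt
  ext η
  rw [mem_ofPred_eq, forall_cvarDualObjective_le_iff h hα.1, mem_Icc,
    csInf_setOf_le_apply_le_iff _ hA (hB.mono hBA),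
    le_csInf_setOf_lt_apply_iff (monotone_cdf ν) (hA.mono hBA) hB]

end CVaRDual

theorem cvar_dual_argmin_eq_quantile_interval_general
    {Z : Type*} [MeasurableSpace Z] (P : Measure Z) [IsProbabilityMeasure P]
    (μ : Z → ℝ) (hμ : Measurable μ)
    (hint : Integrable (fun z => max (μ z) 0) P)
    (α : ℝ) (hα : α ∈ Set.Ioo (0 : ℝ) 1) :
    {η : ℝ | ∀ η' : ℝ,
        (1 / α) * (∫ z, max (μ z - η) 0 ∂P) + η ≤ (1 / α) * (∫ z, max (μ z - η') 0 ∂P) + η'}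
      = Set.Icc (sInf {t : ℝ | ENNReal.ofReal (1 - α) ≤ P {z | μ z ≤ t}})
          (sInf {t : ℝ | ENNReal.ofReal (1 - α) < P {z | μ z ≤ t}}) := by
  have := Measure.isProbabilityMeasure_map (μ := P) hμ.aemeasurable
  have hint_map : Integrable (fun x : ℝ => max x 0) (P.map μ) :=
    (integrable_map_measure (by fun_prop) hμ.aemeasurable).2 hint
  have hintegral (η : ℝ) : ∫ z, max (μ z - η) 0 ∂P = ∫ x, max (x - η) 0 ∂(P.map μ) :=
    (integral_map (μ := P) (f := fun x => max (x - η) 0) hμ.aemeasurable (by fun_prop)).symm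
  have hcdf (t : ℝ) : P {z | μ z ≤ t} = ENNReal.ofReal (cdf (P.map μ) t) := by
    rw [ofReal_cdf, Measure.map_apply hμ measurableSet_Iic]
    rfl
  have h1α : 0 ≤ 1 - α := by linarith [hα.2]
  simp only [hintegral, hcdf, ENNReal.ofReal_le_ofReal_iff (cdf_nonneg _ _),
    ENNReal.ofReal_lt_ofReal_iff_of_nonneg h1α]
  exact setOf_forall_cvarDualObjective_le_eq_Icc hint_map hα

/-- The minimizers of the dual CVaR objective are exactly the interval between the
`(1−α)`-quantile and the upper `(1−α)`-quantile. -/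
theorem cvar_dual_argmin_eq_quantile_interval
    {Z : Type*} [MeasurableSpace Z] (P : Measure Z) [IsProbabilityMeasure P]
    (μ : Z → ℝ) (hμ : Measurable μ)
    (hnonneg : ∀ᵐ z ∂P, 0 ≤ μ z)
    (hint : Integrable (fun z => max (μ z) 0) P)
    (α : ℝ) (hα : α ∈ Set.Ioo (0 : ℝ) 1) :
    {η : ℝ | ∀ η' : ℝ,
        (1 / α) * (∫ z, max (μ z - η) 0 ∂P) + η ≤ (1 / α) * (∫ z, max (μ z - η') 0 ∂P) + η'}
      = Set.Icc (sInf {t : ℝ | ENNReal.ofReal (1 - α) ≤ P {z | μ z ≤ t}})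
          (sInf {t : ℝ | ENNReal.ofReal (1 - α) < P {z | μ z ≤ t}}) :=
  cvar_dual_argmin_eq_quantile_interval_general P μ hμ hint α hα
end

section
/- In the setting of the previous quantile representation: for any random variable L with finite first moment and any α ∈ (0,1), writing h(t) := F_L^{-1}(1−t) − ∫_{(t,1]} a^{-1} dλ_L(a) for a probability measure λ_L on (0,1], the identity ∫_0^α [h(t) − h(α)] dt = E_P[(L − F_L^{-1}(1−α))_+] − λ_L((0,α]) holds. -/
open MeasureTheory ProbabilityTheory Set
open scoped ENNReal

/-!
Let `Q p` be the lower quantile of the law `μ` of `L`, so that the quantile term of `h t` is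
`Q (1 - t)`. Since `Q p ≤ x ↔ p ≤ F x` for the distribution function `F` of `μ`, the quantile
transform maps the uniform law on `(0, 1)` to `μ`; as `Q` is monotone, `(Q p - Q (1 - α))_+`
vanishes for `p < 1 - α`, so the quantile part of `∫₀^α (h t - h α) dt` is `E[(L - Q (1 - α))_+]`.
For `0 < t ≤ α` the other part of `h t - h α` is `-∫_{(t, α]} a⁻¹ dλ`, and exchanging the order
of integration gives `∫₀^α ∫_{(t, α]} a⁻¹ dλ(a) dt = ∫_{(0, α]} a · a⁻¹ dλ(a) = λ((0, α])`.
-/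

/-- Outside `(0, 1)` the defining set is empty or unbounded below, and `sInf` returns `0`. -/
noncomputable def quantile (μ : Measure ℝ) (p : ℝ) : ℝ :=
  sInf {s | ENNReal.ofReal p ≤ μ (Iic s)}

section Quantile

variable (μ : Measure ℝ) [IsProbabilityMeasure μ]

theorem quantile_eq_sInf_cdf (p : ℝ) : quantile μ p = sInf {s | p ≤ cdf μ s} := by
  simp_rw [quantile, ← ofReal_cdf, ENNReal.ofReal_le_ofReal_iff (cdf_nonneg μ _)]

variable {μ}

theorem quantile_le_iff {p : ℝ} (hp : p ∈ Ioo 0 1) (x : ℝ) :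
    quantile μ p ≤ x ↔ p ≤ cdf μ x := by
  have hne : {s | p ≤ cdf μ s}.Nonempty :=
    ((tendsto_cdf_atTop μ).eventually (eventually_ge_nhds hp.2)).exists
  obtain ⟨s₀, hs₀⟩ := ((tendsto_cdf_atBot μ).eventually (eventually_lt_nhds hp.1)).exists
  have hbdd : BddBelow {s | p ≤ cdf μ s} := ⟨s₀, fun s hs =>
    le_of_not_gt fun hlt => (hs.trans (monotone_cdf μ hlt.le)).not_gt hs₀⟩
  rw [quantile_eq_sInf_cdf]
  refine ⟨fun hx => ?_, fun hx => csInf_le hbdd hx⟩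
  -- `cdf μ` is right-continuous and `≥ p` at every point to the right of `x`.
  refine ge_of_tendsto (((cdf μ).right_continuous x).mono_left
    (nhdsWithin_mono _ Ioi_subset_Ici_self)) ?_
  filter_upwards [self_mem_nhdsWithin] with y hy
  obtain ⟨s, hs, hsy⟩ := exists_lt_of_csInf_lt hne (hx.trans_lt hy)
  exact hs.trans (monotone_cdf μ hsy.le)

theorem monotoneOn_quantile : MonotoneOn (quantile μ) (Ioo 0 1) := fun _ hp _ hp' hpp' =>
  (quantile_le_iff hp _).2 (hpp'.trans ((quantile_le_iff hp' _).1 le_rfl))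

theorem aemeasurable_quantile : AEMeasurable (quantile μ) (volume.restrict (Ioo 0 1)) :=
  aemeasurable_restrict_of_monotoneOn measurableSet_Ioo monotoneOn_quantile

variable (μ)

theorem map_quantile : (volume.restrict (Ioo 0 1)).map (quantile μ) = μ := by
  refine Measure.ext_of_Iic _ _ fun x => ?_
  have hpre : quantile μ ⁻¹' Iic x ∩ Ioo 0 1 = Iic (cdf μ x) ∩ Ioo 0 1 := by
    ext p
    simp only [mem_inter_iff, mem_preimage, mem_Iic]
    exact and_congr_left (quantile_le_iff · x)
  have hIoc : Iic (cdf μ x) ∩ Ioc 0 1 = Ioc 0 (cdf μ x) :=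
    Iic_inter_Ioc_of_le (cdf_le_one μ x)
  rw [Measure.map_apply_of_aemeasurable aemeasurable_quantile measurableSet_Iic,
    Measure.restrict_apply' measurableSet_Ioo, hpre, ← Measure.restrict_apply' measurableSet_Ioo,
    Measure.restrict_congr_set Ioo_ae_eq_Ioc, Measure.restrict_apply' measurableSet_Ioc, hIoc,
    Real.volume_Ioc, sub_zero, ofReal_cdf]

theorem integral_comp_quantile {E : Type*} [NormedAddCommGroup E] [NormedSpace ℝ E]
    {f : ℝ → E} (hf : AEStronglyMeasurable f μ) :
    ∫ p in Ioo 0 1, f (quantile μ p) = ∫ x, f x ∂μ := by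
  rw [← integral_map aemeasurable_quantile (by rwa [map_quantile]), map_quantile]

theorem integrableOn_quantile (hμ : Integrable id μ) : IntegrableOn (quantile μ) (Ioo 0 1) := by
  rw [← map_quantile μ, integrable_map_measure aestronglyMeasurable_id aemeasurable_quantile]
    at hμ
  exact hμ

variable {μ}

theorem intervalIntegrable_quantile (hμ : Integrable id μ) {β : ℝ} (hβ : β ∈ Icc 0 1) :
    IntervalIntegrable (quantile μ) volume β 1 :=
  (intervalIntegrable_iff_integrableOn_Ioo_of_le hβ.2).2
    ((integrableOn_quantile μ hμ).mono_set (Ioo_subset_Ioo_left hβ.1))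

theorem integral_quantile_sub_quantile {β : ℝ} (hβ : β ∈ Ioo 0 1) :
    ∫ p in β..1, (quantile μ p - quantile μ β) = ∫ x, max (x - quantile μ β) 0 ∂μ := by
  set c := quantile μ β
  have hpos : EqOn (fun p => max (quantile μ p - c) 0)
      ((Ioc β 1).indicator fun p => quantile μ p - c) (Ioo 0 1) := by
    intro p hp
    dsimp only
    rcases le_or_gt p β with hpβ | hβp
    · rw [indicator_of_notMem (fun h => h.1.not_ge hpβ), max_eq_right]
      exact sub_nonpos.2 (monotoneOn_quantile hp hβ hpβ)
    · rw [indicator_of_mem (show p ∈ Ioc β 1 from ⟨hβp, hp.2.le⟩), max_eq_left]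
      exact sub_nonneg.2 (monotoneOn_quantile hβ hp hβp.le)
  have hIoo : Ioo 0 1 ∩ Ioc β 1 = Ioo β 1 := by
    ext p; simp only [mem_inter_iff, mem_Ioo, mem_Ioc] at hβ ⊢; grind
  rw [← integral_comp_quantile μ (by fun_prop), setIntegral_congr_fun measurableSet_Ioo hpos,
    setIntegral_indicator measurableSet_Ioc, hIoo, intervalIntegral.integral_of_le hβ.2.le,
    integral_Ioc_eq_integral_Ioo]

end Quantile

theorem lintegral_Ioc_lintegral_Ioc_swap (ν : Measure ℝ) [SFinite ν] {f : ℝ → ℝ≥0∞}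
    (hf : Measurable f) (a b : ℝ) :
    ∫⁻ t in Ioc a b, ∫⁻ x in Ioc t b, f x ∂ν =
      ∫⁻ x in Ioc a b, f x * ENNReal.ofReal (x - a) ∂ν := by
  have hmeas : Measurable (Function.uncurry fun t x => (Ioc t b).indicator f x) :=
    (hf.comp measurable_snd).indicator
      ((measurableSet_lt measurable_fst measurable_snd).inter (measurable_snd measurableSet_Iic))
  have hind : ∀ t x,
      (Ioc t b).indicator f x = (Iio x).indicator (fun _ => (Iic b).indicator f x) t := by
    intro t x
    by_cases ht : t < x <;> by_cases hx : x ≤ b <;> simp [indicator, ht, hx]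
  have hvol : ∀ x, (Iic b).indicator f x * volume (Iio x ∩ Ioc a b) =
      (Ioc a b).indicator (fun x => f x * ENNReal.ofReal (x - a)) x := by
    intro x
    by_cases hx : x ∈ Ioc a b
    · have hIoo : Iio x ∩ Ioc a b = Ioo a x := by
        ext t; simp only [mem_inter_iff, mem_Iio, mem_Ioc, mem_Ioo] at hx ⊢; grind
      rw [indicator_of_mem (show x ∈ Iic b from hx.2), indicator_of_mem hx, hIoo,
        Real.volume_Ioo]
    rw [indicator_of_notMem hx]
    by_cases hxb : x ≤ b
    · have hempty : Iio x ∩ Ioc a b = ∅ := by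
        ext t; simp only [mem_inter_iff, mem_Iio, mem_Ioc, mem_empty_iff_false, iff_false] at hx ⊢
        grind
      rw [hempty, measure_empty, mul_zero]
    · rw [indicator_of_notMem (show x ∉ Iic b from hxb), zero_mul]
  calc ∫⁻ t in Ioc a b, ∫⁻ x in Ioc t b, f x ∂ν
      = ∫⁻ t in Ioc a b, ∫⁻ x, (Ioc t b).indicator f x ∂ν := by
        simp_rw [lintegral_indicator measurableSet_Ioc]
    _ = ∫⁻ x, (∫⁻ t in Ioc a b, (Ioc t b).indicator f x) ∂ν :=
        lintegral_lintegral_swap hmeas.aemeasurable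
    _ = ∫⁻ x, (Iic b).indicator f x * volume (Iio x ∩ Ioc a b) ∂ν := by
        simp_rw [hind, lintegral_indicator_const measurableSet_Iio,
          Measure.restrict_apply measurableSet_Iio]
    _ = ∫⁻ x in Ioc a b, f x * ENNReal.ofReal (x - a) ∂ν := by
        simp_rw [hvol]
        rw [lintegral_indicator measurableSet_Ioc]

theorem measurable_setLIntegral_Ioc_left (ν : Measure ℝ) (f : ℝ → ℝ≥0∞) (b : ℝ) :
    Measurable fun t => ∫⁻ x in Ioc t b, f x ∂ν :=
  Antitone.measurable fun _ _ h => lintegral_mono_set (Ioc_subset_Ioc_left h)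

theorem setIntegral_Ioc_sub_setIntegral_Ioc {ν : Measure ℝ} {f : ℝ → ℝ} {a b c : ℝ}
    (hab : a ≤ b) (hbc : b ≤ c) (hf : IntegrableOn f (Ioc a c) ν) :
    ∫ x in Ioc a c, f x ∂ν - ∫ x in Ioc b c, f x ∂ν = ∫ x in Ioc a b, f x ∂ν := by
  rw [← Ioc_union_Ioc_eq_Ioc hab hbc] at hf ⊢
  rw [setIntegral_union (Ioc_disjoint_Ioc_of_le le_rfl) measurableSet_Ioc
    (hf.mono_set subset_union_left) (hf.mono_set subset_union_right), add_sub_cancel_right]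

section Inverse

variable (ν : Measure ℝ)

theorem integrableOn_inv_Ioi [IsFiniteMeasure ν] {t : ℝ} (ht : 0 < t) :
    IntegrableOn (fun x => x⁻¹) (Ioi t) ν :=
  Measure.integrableOn_of_bounded (M := t⁻¹) (measure_ne_top ν _)
    measurable_inv.aestronglyMeasurable <| (ae_restrict_mem measurableSet_Ioi).mono fun x hx => by
      rw [Real.norm_eq_abs, abs_inv, abs_of_pos (ht.trans hx)]
      exact inv_anti₀ ht (le_of_lt hx)

theorem setIntegral_Ioc_inv_ae_eq_toReal (b : ℝ) :
    (fun t => ∫ x in Ioc t b, x⁻¹ ∂ν) =ᵐ[volume.restrict (Ioc 0 b)]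
      fun t => (∫⁻ x in Ioc t b, ENNReal.ofReal x⁻¹ ∂ν).toReal :=
  (ae_restrict_mem measurableSet_Ioc).mono fun _ ht => integral_eq_lintegral_of_nonneg_ae
    ((ae_restrict_mem measurableSet_Ioc).mono fun _ hx => inv_nonneg.2 (ht.1.trans hx.1).le)
    measurable_inv.aestronglyMeasurable

theorem lintegral_Ioc_lintegral_Ioc_inv [SFinite ν] (b : ℝ) :
    ∫⁻ t in Ioc 0 b, ∫⁻ x in Ioc t b, ENNReal.ofReal x⁻¹ ∂ν = ν (Ioc 0 b) := by
  rw [lintegral_Ioc_lintegral_Ioc_swap ν measurable_inv.ennreal_ofReal, ← setLIntegral_one]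
  refine setLIntegral_congr_fun measurableSet_Ioc fun x hx => ?_
  rw [sub_zero, ← ENNReal.ofReal_mul (inv_nonneg.2 hx.1.le), inv_mul_cancel₀ hx.1.ne',
    ENNReal.ofReal_one]

theorem lintegral_Ioc_lintegral_Ioc_inv_ne_top [IsLocallyFiniteMeasure ν] (b : ℝ) :
    ∫⁻ t in Ioc 0 b, ∫⁻ x in Ioc t b, ENNReal.ofReal x⁻¹ ∂ν ≠ ∞ := by
  rw [lintegral_Ioc_lintegral_Ioc_inv]
  exact measure_Ioc_lt_top.ne

theorem intervalIntegrable_setIntegral_Ioc_inv [IsLocallyFiniteMeasure ν] {b : ℝ} (hb : 0 ≤ b) :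
    IntervalIntegrable (fun t => ∫ x in Ioc t b, x⁻¹ ∂ν) volume 0 b := by
  rw [intervalIntegrable_iff_integrableOn_Ioc_of_le hb]
  exact (integrable_toReal_of_lintegral_ne_top
    (measurable_setLIntegral_Ioc_left ν _ b).aemeasurable
    (lintegral_Ioc_lintegral_Ioc_inv_ne_top ν b)).congr (setIntegral_Ioc_inv_ae_eq_toReal ν b).symm

theorem integral_setIntegral_Ioc_inv [IsLocallyFiniteMeasure ν] {b : ℝ} (hb : 0 ≤ b) :
    ∫ t in 0..b, ∫ x in Ioc t b, x⁻¹ ∂ν = ν.real (Ioc 0 b) := by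
  have hG := (measurable_setLIntegral_Ioc_left ν (fun x => ENNReal.ofReal x⁻¹) b).aemeasurable
    (μ := volume.restrict (Ioc 0 b))
  rw [intervalIntegral.integral_of_le hb, integral_congr_ae (setIntegral_Ioc_inv_ae_eq_toReal ν b),
    integral_toReal hG (ae_lt_top' hG (lintegral_Ioc_lintegral_Ioc_inv_ne_top ν b)),
    lintegral_Ioc_lintegral_Ioc_inv, measureReal_def]

end Inverse

theorem quantile_representation_identity_general
    {Ω : Type*} [MeasurableSpace Ω] (P : Measure Ω) [IsProbabilityMeasure P]
    (L : Ω → ℝ) (hL : Integrable L P)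
    (lam : Measure ℝ) [IsProbabilityMeasure lam]
    (α : ℝ) (hα : α ∈ Set.Ioo (0 : ℝ) 1)
    (h : ℝ → ℝ)
    (hdef : ∀ t : ℝ, h t = sInf {s : ℝ | ENNReal.ofReal (1 - t) ≤ P {ω | L ω ≤ s}}
        - ∫ a in Set.Ioc t 1, a⁻¹ ∂lam) :
    (∫ t in (0 : ℝ)..α, (h t - h α))
      = (∫ ω, max (L ω - sInf {s : ℝ | ENNReal.ofReal (1 - α) ≤ P {ω' | L ω' ≤ s}}) 0 ∂P)
        - (lam (Set.Ioc 0 α)).toReal := by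
  obtain ⟨hα₀, hα₁⟩ := hα
  set μ := P.map L
  have : IsProbabilityMeasure μ := Measure.isProbabilityMeasure_map hL.aemeasurable
  have hq : ∀ t, sInf {s : ℝ | ENNReal.ofReal (1 - t) ≤ P {ω | L ω ≤ s}} = quantile μ (1 - t) := by
    intro t
    simp_rw [quantile, μ, Measure.map_apply₀ hL.aemeasurable measurableSet_Iic.nullMeasurableSet]
    rfl
  have hμ : Integrable id μ :=
    (integrable_map_measure aestronglyMeasurable_id hL.aemeasurable).2 hL
  have hβ : 1 - α ∈ Ioo 0 1 := ⟨by linarith, by linarith⟩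
  have hsplit : ∀ t ∈ Ioc 0 α, h t - h α =
      (quantile μ (1 - t) - quantile μ (1 - α)) - ∫ a in Ioc t α, a⁻¹ ∂lam := by
    intro t ht
    rw [hdef, hdef, hq, hq, ← setIntegral_Ioc_sub_setIntegral_Ioc ht.2 hα₁.le
      ((integrableOn_inv_Ioi lam ht.1).mono_set Ioc_subset_Ioi_self)]
    ring
  have hA : IntervalIntegrable (fun t => quantile μ (1 - t) - quantile μ (1 - α)) volume 0 α := by
    simpa using ((intervalIntegrable_quantile hμ (Ioo_subset_Icc_self hβ)).comp_sub_left 1).symm.sub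
      intervalIntegrable_const
  have hA_eq : ∫ t in 0..α, (quantile μ (1 - t) - quantile μ (1 - α)) =
      ∫ ω, max (L ω - quantile μ (1 - α)) 0 ∂P := by
    rw [intervalIntegral.integral_comp_sub_left (fun p => quantile μ p - quantile μ (1 - α)),
      sub_zero, integral_quantile_sub_quantile hβ, integral_map hL.aemeasurable (by fun_prop)]
  rw [intervalIntegral.integral_congr_ae (ae_of_all _ fun t ht =>
      hsplit t (by rwa [uIoc_of_le hα₀.le] at ht)),
    intervalIntegral.integral_sub hA (intervalIntegrable_setIntegral_Ioc_inv lam hα₀.le), hA_eq,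
    integral_setIntegral_Ioc_inv lam hα₀.le, hq, measureReal_def]

/-- Identity underlying the quantile representation: with
`h(t) = F_L⁻¹(1−t) − ∫_{(t,1]} a⁻¹ dλ_L(a)`, one has
`∫₀^α [h(t) − h(α)] dt = E[(L − F_L⁻¹(1−α))_+] − λ_L((0,α])`. -/
theorem quantile_representation_identity
    {Ω : Type*} [MeasurableSpace Ω] (P : Measure Ω) [IsProbabilityMeasure P]
    (L : Ω → ℝ) (hL : Integrable L P)
    (lam : Measure ℝ) [IsProbabilityMeasure lam] (hsupp : lam (Set.Ioc (0 : ℝ) 1)ᶜ = 0)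
    (α : ℝ) (hα : α ∈ Set.Ioo (0 : ℝ) 1)
    (h : ℝ → ℝ)
    (hdef : ∀ t : ℝ, h t = sInf {s : ℝ | ENNReal.ofReal (1 - t) ≤ P {ω | L ω ≤ s}}
        - ∫ a in Set.Ioc t 1, a⁻¹ ∂lam) :
    (∫ t in (0 : ℝ)..α, (h t - h α))
      = (∫ ω, max (L ω - sInf {s : ℝ | ENNReal.ofReal (1 - α) ≤ P {ω' | L ω' ≤ s}}) 0 ∂P)
        - (lam (Set.Ioc 0 α)).toReal :=
  quantile_representation_identity_general P L hL lam α hα h hdef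
end
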